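/- Let K be a finite, pure, strongly connected simplicial complex of dimension n. Then 1 is an eigenvalue of the top down discriminant D_n^down (i.e. there is a nonzero g ∈ ℓ²(K_n) with D_n^down g = g) if and only if K is totally non-coherently orientable. -/

import Mathlib

open scoped BigOperators

/-- The set of oriented `q`-simplices of a simplicial complex, together with the
orientation-reversal involution `bar` (writing `τ̄` for `bar τ`). -/
structure OrientedSet where
  K : Type
  bar : K → K
  bar_invol : ∀ τ, bar (bar τ) = τ
  bar_ne : ∀ τ, bar τ ≠ τ

/-- The data of an up graph (`mult = 2(q+1)`) or a down graph (`mult = 2`) on the set of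
oriented `q`-simplices: the sign function `η` (extended by `0` off the edge set, so that
`(τ₁, τ₂)` is an edge iff `eta τ₁ τ₂ ≠ 0`), the degree function (`deg_X`, resp. `deg_Y`),
and local finiteness; the degree of a vertex `τ` in the graph is `mult * deg τ`. -/
structure GroverStructure (O : OrientedSet) where
  eta : O.K → O.K → ℝ
  eta_symm : ∀ τ₁ τ₂, eta τ₁ τ₂ = eta τ₂ τ₁
  eta_vals : ∀ τ₁ τ₂, eta τ₁ τ₂ = 0 ∨ eta τ₁ τ₂ = 1 ∨ eta τ₁ τ₂ = -1
  eta_bar_left : ∀ τ₁ τ₂, eta (O.bar τ₁) τ₂ = - eta τ₁ τ₂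
  eta_self : ∀ τ, eta τ τ = 0
  eta_bar_self : ∀ τ, eta τ (O.bar τ) = 0
  deg : O.K → ℕ
  deg_pos : ∀ τ, 0 < deg τ
  deg_bar : ∀ τ, deg (O.bar τ) = deg τ
  mult : ℕ
  nbhdFinite : ∀ τ, {τ' | eta τ τ' ≠ 0}.Finite
  nbhd_card : ∀ τ, (nbhdFinite τ).toFinset.card = mult * deg τ

namespace GroverStructure

variable {O : OrientedSet} (Y : GroverStructure O)

/-- `(τ₁, τ₂)` is an oriented edge of the up/down graph. -/
def Edge (τ₁ τ₂ : O.K) : Prop := Y.eta τ₁ τ₂ ≠ 0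

/-- The normalization constant `(mult * deg τ)^(-1/2)`. -/
noncomputable def c (τ : O.K) : ℂ := ((Real.sqrt (Y.mult * Y.deg τ) : ℝ) : ℂ)⁻¹

/-- The operator `d : ℓ²(E) → ℓ²(K)`; elements of `ℓ²(E)` are represented as
functions on `K × K` (supported on the set of edges). -/
noncomputable def d (g : O.K × O.K → ℂ) : O.K → ℂ :=
  fun τ => Y.c τ * ∑ᶠ τ' ∈ {τ' | Y.eta τ τ' ≠ 0}, g (τ, τ')

/-- The adjoint `d* : ℓ²(K) → ℓ²(E)`. -/
noncomputable def dstar (f : O.K → ℂ) : O.K × O.K → ℂ :=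
  fun p => if Y.eta p.1 p.2 ≠ 0 then Y.c p.1 * f p.1 else 0

/-- The shift operator `(S g)(τ₁,τ₂) = η(τ₁,τ₂) • g(τ₂,τ₁)`. -/
noncomputable def shift (g : O.K × O.K → ℂ) : O.K × O.K → ℂ :=
  fun p => (Y.eta p.1 p.2 : ℂ) * g (p.2, p.1)

/-- The discriminant operator `D = d ∘ S ∘ d*`. -/
noncomputable def disc (f : O.K → ℂ) : O.K → ℂ := Y.d (Y.shift (Y.dstar f))

/-- The Grover walk `U = S (2 d* d − I)`. -/
noncomputable def walk (g : O.K × O.K → ℂ) : O.K × O.K → ℂ :=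
  Y.shift (fun p => 2 * Y.dstar (Y.d g) p - g p)

/-- Membership in `ℓ²(E)`: square summable and supported on the edge set. -/
def MemEdge (g : O.K × O.K → ℂ) : Prop :=
  Memℓp g 2 ∧ ∀ p : O.K × O.K, ¬ Y.Edge p.1 p.2 → g p = 0

end GroverStructure

/-- The orthogonal projection of `ℓ²(K_q)` onto the cochain space
`C^q(K,ℂ) = {f : f(τ̄) = -f(τ)}`. -/
noncomputable def projC (O : OrientedSet) (f : O.K → ℂ) : O.K → ℂ :=
  fun τ => (f τ - f (O.bar τ)) / 2

/-- The incidence signs `sgn(σ,τ)` between oriented simplices of two consecutive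
dimensions (`Olow` models `K_q`, `Ohigh` models `K_{q+1}`): `sgn σ τ ∈ {±1}` if the
underlying simplex `[τ]` is a face of `[σ]`, and `sgn σ τ = 0` otherwise. -/
structure SgnPair (Olow Ohigh : OrientedSet) where
  sgn : Ohigh.K → Olow.K → ℝ
  sgn_vals : ∀ σ τ, sgn σ τ = 0 ∨ sgn σ τ = 1 ∨ sgn σ τ = -1
  sgn_bar_left : ∀ σ τ, sgn (Ohigh.bar σ) τ = - sgn σ τ
  sgn_bar_right : ∀ σ τ, sgn σ (Olow.bar τ) = - sgn σ τ
  facesFinite : ∀ σ, {τ | sgn σ τ ≠ 0}.Finite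
  cofacesFinite : ∀ τ, {σ | sgn σ τ ≠ 0}.Finite

namespace SgnPair

variable {Olow Ohigh : OrientedSet} (P : SgnPair Olow Ohigh)

/-- The coboundary operator `(δ_q f)(σ) = (1/2) ∑_{τ ∈ K_q} sgn(σ,τ) f(τ)`. -/
noncomputable def delta (f : Olow.K → ℂ) : Ohigh.K → ℂ :=
  fun σ => (1 / 2 : ℂ) * ∑ᶠ τ, (P.sgn σ τ : ℂ) * f τ

/-- The adjoint coboundary `(δ_q* g)(τ) = (1/2) ∑_{σ ∈ K_{q+1}} sgn(σ,τ) g(σ)`. -/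
noncomputable def deltaStar (g : Ohigh.K → ℂ) : Olow.K → ℂ :=
  fun τ => (1 / 2 : ℂ) * ∑ᶠ σ, (P.sgn σ τ : ℂ) * g σ

end SgnPair

/-- The Grover structure `X` is the up graph structure at level `q` induced by the
incidence signs into level `q+1`: two oriented `q`-simplices span an edge iff their
underlying simplices are distinct up neighbors, `η^up(τ₁,τ₂) = sgn(σ,τ₁)·sgn(σ,τ₂)`
for (either orientation of) the common `(q+1)`-simplex `σ`, and `deg_X τ` is the number
of `(q+1)`-simplices containing `[τ]` as a face (each such simplex having exactly two
orientations). -/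
def GroverStructure.IsUpOf {O Oup : OrientedSet} (X : GroverStructure O)
    (P : SgnPair O Oup) : Prop :=
  (∀ τ₁ τ₂ : O.K, X.eta τ₁ τ₂ ≠ 0 ↔
      τ₁ ≠ τ₂ ∧ τ₁ ≠ O.bar τ₂ ∧ ∃ σ, P.sgn σ τ₁ ≠ 0 ∧ P.sgn σ τ₂ ≠ 0) ∧
  (∀ τ₁ τ₂ σ, τ₁ ≠ τ₂ → τ₁ ≠ O.bar τ₂ → P.sgn σ τ₁ ≠ 0 → P.sgn σ τ₂ ≠ 0 →
      X.eta τ₁ τ₂ = P.sgn σ τ₁ * P.sgn σ τ₂) ∧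
  (∀ τ, (P.cofacesFinite τ).toFinset.card = 2 * X.deg τ)

/-- The Grover structure `Y` is the down graph structure at level `q+1` induced by the
incidence signs from level `q`: two oriented `(q+1)`-simplices span an edge iff their
underlying simplices are distinct down neighbors, and
`η^down(σ₁,σ₂) = sgn(σ₁,μ)·sgn(σ₂,μ)` for (either orientation of) a common face `μ`. -/
def GroverStructure.IsDownOf {Odn O : OrientedSet} (Y : GroverStructure O)
    (P : SgnPair Odn O) : Prop :=
  (∀ σ₁ σ₂ : O.K, Y.eta σ₁ σ₂ ≠ 0 ↔
      σ₁ ≠ σ₂ ∧ σ₁ ≠ O.bar σ₂ ∧ ∃ μ, P.sgn σ₁ μ ≠ 0 ∧ P.sgn σ₂ μ ≠ 0) ∧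
  (∀ σ₁ σ₂ μ, σ₁ ≠ σ₂ → σ₁ ≠ O.bar σ₂ → P.sgn σ₁ μ ≠ 0 → P.sgn σ₂ μ ≠ 0 →
      Y.eta σ₁ σ₂ = P.sgn σ₁ μ * P.sgn σ₂ μ)

/-- `A ⊆ K_n` is an orientation: it contains exactly one of `σ`, `σ̄` for each `σ`. -/
def OrientedSet.IsOrientation (O : OrientedSet) (A : Set O.K) : Prop :=
  ∀ τ, τ ∈ A ↔ O.bar τ ∉ A

/-- `K` is coherently orientable: there is an orientation `K_n^o` such that
`sgn(σ₁,τ)·sgn(σ₂,τ) = −1` for any two down-neighboring `σ₁, σ₂ ∈ K_n^o`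
with common `(n−1)`-face `τ`. -/
def SgnPair.CoherentlyOrientable {Odn O : OrientedSet} (P : SgnPair Odn O) : Prop :=
  ∃ A : Set O.K, O.IsOrientation A ∧
    ∀ σ₁ ∈ A, ∀ σ₂ ∈ A, σ₁ ≠ σ₂ → σ₁ ≠ O.bar σ₂ →
      ∀ μ, P.sgn σ₁ μ ≠ 0 → P.sgn σ₂ μ ≠ 0 → P.sgn σ₁ μ * P.sgn σ₂ μ = -1

/-- `K` is totally non-coherently orientable: there is an orientation `K_n^o` such that
`sgn(σ₁,τ)·sgn(σ₂,τ) = 1` for any two down-neighboring `σ₁, σ₂ ∈ K_n^o`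
with common `(n−1)`-face `τ`. -/
def SgnPair.TotallyNonCoherentlyOrientable {Odn O : OrientedSet} (P : SgnPair Odn O) : Prop :=
  ∃ A : Set O.K, O.IsOrientation A ∧
    ∀ σ₁ ∈ A, ∀ σ₂ ∈ A, σ₁ ≠ σ₂ → σ₁ ≠ O.bar σ₂ →
      ∀ μ, P.sgn σ₁ μ ≠ 0 → P.sgn σ₂ μ ≠ 0 → P.sgn σ₁ μ * P.sgn σ₂ μ = 1

/-!
An eigenvector `f` of `D = d S d*` for the eigenvalue `1` gives, after rescaling
`g τ = f τ / √(2 deg τ)`, a function whose value at every `τ` is the mean of the twisted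
neighbouring values `η(τ, τ') g τ'`. At a point where `‖g‖` is maximal all these neighbouring
values must then equal `g τ`, so by strong connectivity `‖g‖` is constant and
`η(τ, τ') g τ' = g τ` along every edge. Since `g` is odd under orientation reversal, the set
`{τ | g τ = g τ₀}` is an orientation on which `η^down ≡ 1`, which is total non-coherence.
Conversely, the `±1`-valued sign function of such an orientation, rescaled by `√(2 deg τ)`,
is an eigenvector for `1`.
-/

open Finset

theorem eq_of_norm_le_of_card_nsmul_eq_sum {ι V : Type*} [NormedAddCommGroup V]
    [NormedSpace ℝ V] [StrictConvexSpace ℝ V] {s : Finset ι} {z : ι → V} {w : V}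
    (hz : ∀ i ∈ s, ‖z i‖ ≤ ‖w‖) (hw : #s • w = ∑ i ∈ s, z i) {i : ι} (hi : i ∈ s) :
    z i = w := by
  have hcard : (#s : ℝ) ≠ 0 := by exact_mod_cast (card_ne_zero_of_mem hi)
  have hmean : ∑ k ∈ s, (#s : ℝ)⁻¹ • z k = w := by
    rw [← smul_sum, ← hw, ← Nat.cast_smul_eq_nsmul ℝ, smul_smul, inv_mul_cancel₀ hcard,
      one_smul]
  have hconst : ∀ j ∈ s, z j = z i := by
    intro j hj
    by_contra hne
    have hlt := norm_sum_lt_of_strictConvexSpace (w := fun _ => (#s : ℝ)⁻¹)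
      (fun _ _ => by positivity) (by simp [hcard]) hj hi hne (inv_ne_zero hcard)
      (inv_ne_zero hcard) hz
    exact (hmean ▸ hlt).false
  rw [sum_congr rfl hconst, sum_const, ← Nat.cast_smul_eq_nsmul ℝ,
    ← Nat.cast_smul_eq_nsmul ℝ] at hw
  exact (smul_right_injective V hcard hw).symm

namespace OrientedSet

variable {O : OrientedSet} {A : Set O.K}

theorem IsOrientation.mem_or_bar_mem (hA : O.IsOrientation A) (τ : O.K) :
    τ ∈ A ∨ O.bar τ ∈ A :=
  or_iff_not_imp_left.2 fun h => not_not.1 (mt (hA τ).2 h)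

open Classical in
noncomputable def orientationSign (A : Set O.K) (τ : O.K) : ℂ := if τ ∈ A then 1 else -1

theorem orientationSign_ne_zero (τ : O.K) : orientationSign A τ ≠ 0 := by
  unfold orientationSign
  split_ifs <;> norm_num

theorem IsOrientation.orientationSign_bar (hA : O.IsOrientation A) (τ : O.K) :
    orientationSign A (O.bar τ) = - orientationSign A τ := by
  rcases hA.mem_or_bar_mem τ with h | h
  · simp [orientationSign, h, (hA τ).1 h]
  · have hτ : τ ∉ A := fun hτ => (hA τ).1 hτ h
    simp [orientationSign, h, hτ]

end OrientedSet

namespace GroverStructure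

open OrientedSet

variable {O : OrientedSet} (Y : GroverStructure O)

noncomputable abbrev nbhd (τ : O.K) : Finset O.K := (Y.nbhdFinite τ).toFinset

@[simp]
theorem mem_nbhd {τ τ' : O.K} : τ' ∈ Y.nbhd τ ↔ Y.eta τ τ' ≠ 0 := by
  simp [nbhd]

theorem eta_bar_right (τ₁ τ₂ : O.K) : Y.eta τ₁ (O.bar τ₂) = - Y.eta τ₁ τ₂ := by
  rw [Y.eta_symm, Y.eta_bar_left, Y.eta_symm]

theorem norm_eta {τ₁ τ₂ : O.K} (h : Y.eta τ₁ τ₂ ≠ 0) : ‖(Y.eta τ₁ τ₂ : ℂ)‖ = 1 := by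
  rcases Y.eta_vals τ₁ τ₂ with h' | h' | h' <;> simp_all

theorem nbhd_bar (τ : O.K) : Y.nbhd (O.bar τ) = Y.nbhd τ := by
  ext τ'
  simp [Y.eta_bar_left]

theorem c_bar (τ : O.K) : Y.c (O.bar τ) = Y.c τ := by
  simp [c, Y.deg_bar]

theorem c_ne_zero (hm : 0 < Y.mult) (τ : O.K) : Y.c τ ≠ 0 := by
  have := Y.deg_pos τ
  simp only [c, ne_eq, inv_eq_zero, Complex.ofReal_eq_zero]
  positivity

theorem card_nbhd_mul_c (τ : O.K) : (#(Y.nbhd τ) : ℂ) * Y.c τ = (Y.c τ)⁻¹ := by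
  rw [c, inv_inv, nbhd, Y.nbhd_card, ← div_eq_mul_inv]
  exact_mod_cast Real.div_sqrt

theorem disc_apply (f : O.K → ℂ) (τ : O.K) :
    Y.disc f τ = Y.c τ * ∑ τ' ∈ Y.nbhd τ, (Y.eta τ τ' : ℂ) * (Y.c τ' * f τ') := by
  rw [disc, d, ← finsum_mem_coe_finset, (Y.nbhdFinite τ).coe_toFinset]
  congr 1
  refine finsum_mem_congr rfl fun τ' hτ' => ?_
  have h : Y.eta τ' τ ≠ 0 := by rw [Y.eta_symm]; exact hτ'
  simp [shift, dstar, h]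

theorem disc_apply_bar (f : O.K → ℂ) (τ : O.K) : Y.disc f (O.bar τ) = - Y.disc f τ := by
  simp [disc_apply, nbhd_bar, c_bar, eta_bar_left, sum_neg_distrib]

def IsEtaInvariant (g : O.K → ℂ) : Prop :=
  ∀ τ₁ τ₂, Y.eta τ₁ τ₂ ≠ 0 → (Y.eta τ₁ τ₂ : ℂ) * g τ₂ = g τ₁

def IsHarmonic (g : O.K → ℂ) : Prop :=
  ∀ τ, (#(Y.nbhd τ) : ℂ) * g τ = ∑ τ' ∈ Y.nbhd τ, (Y.eta τ τ' : ℂ) * g τ'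

def StronglyConnected : Prop :=
  ∀ σ σ' : O.K, σ' ≠ σ → σ' ≠ O.bar σ →
    Relation.ReflTransGen (fun a b => Y.eta a b ≠ 0) σ σ'

def IsBalancedOrientation (A : Set O.K) : Prop :=
  O.IsOrientation A ∧ ∀ τ₁ ∈ A, ∀ τ₂ ∈ A, Y.eta τ₁ τ₂ ≠ 0 → Y.eta τ₁ τ₂ = 1

variable {Y}

theorem StronglyConnected.forall_of_step (hconn : Y.StronglyConnected) {p : O.K → Prop}
    (τ₀ : O.K) (h₀ : p τ₀) (hbar : p (O.bar τ₀))
    (hstep : ∀ τ₁ τ₂, Y.eta τ₁ τ₂ ≠ 0 → p τ₁ → p τ₂) (τ : O.K) : p τ := by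
  by_cases h₁ : τ = τ₀
  · exact h₁ ▸ h₀
  by_cases h₂ : τ = O.bar τ₀
  · exact h₂ ▸ hbar
  have hpath := hconn τ₀ τ h₁ h₂
  clear h₁ h₂
  induction hpath with
  | refl => exact h₀
  | tail _ hedge ih => exact hstep _ _ hedge ih

theorem disc_eq_self_of_isEtaInvariant (hm : 0 < Y.mult) {g : O.K → ℂ}
    (hg : Y.IsEtaInvariant g) :
    Y.disc (fun τ => (Y.c τ)⁻¹ * g τ) = fun τ => (Y.c τ)⁻¹ * g τ := by
  funext τ
  have hsum : ∑ τ' ∈ Y.nbhd τ, (Y.eta τ τ' : ℂ) * (Y.c τ' * ((Y.c τ')⁻¹ * g τ'))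
      = #(Y.nbhd τ) * g τ := by
    rw [← nsmul_eq_mul, ← sum_const]
    refine sum_congr rfl fun τ' hτ' => ?_
    rw [mul_inv_cancel_left₀ (Y.c_ne_zero hm τ'), hg τ τ' ((Y.mem_nbhd).1 hτ')]
  rw [disc_apply, hsum, ← mul_assoc, mul_comm (Y.c τ), card_nbhd_mul_c]

theorem isHarmonic_c_mul_of_disc_eq_self (hm : 0 < Y.mult) {f : O.K → ℂ}
    (hf : Y.disc f = f) : Y.IsHarmonic fun τ => Y.c τ * f τ := by
  intro τ
  have hτ := congrFun hf τ
  rw [disc_apply] at hτ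
  dsimp only
  conv_lhs => rw [← hτ]
  rw [← mul_assoc, ← mul_assoc, card_nbhd_mul_c, inv_mul_cancel₀ (Y.c_ne_zero hm τ), one_mul]

/-- The maximum principle for `η`-harmonic functions. -/
theorem IsHarmonic.isEtaInvariant [Finite O.K] (hconn : Y.StronglyConnected)
    {g : O.K → ℂ} (hg : Y.IsHarmonic g) (hbar : ∀ τ, ‖g (O.bar τ)‖ = ‖g τ‖) :
    Y.IsEtaInvariant g := by
  rcases isEmpty_or_nonempty O.K with hO | hO
  · exact fun τ => isEmptyElim τ
  obtain ⟨τ₀, hmax⟩ := Finite.exists_max fun τ => ‖g τ‖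
  have hlocal : ∀ τ₁, ‖g τ₁‖ = ‖g τ₀‖ → ∀ τ₂, Y.eta τ₁ τ₂ ≠ 0 →
      (Y.eta τ₁ τ₂ : ℂ) * g τ₂ = g τ₁ := fun τ₁ h₁ τ₂ h₂ =>
    eq_of_norm_le_of_card_nsmul_eq_sum (z := fun τ => (Y.eta τ₁ τ : ℂ) * g τ)
      (fun τ hτ => by rw [norm_mul, Y.norm_eta ((Y.mem_nbhd).1 hτ), one_mul, h₁]; exact hmax τ)
      (by rw [nsmul_eq_mul]; exact hg τ₁) ((Y.mem_nbhd).2 h₂)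
  have hnorm : ∀ τ, ‖g τ‖ = ‖g τ₀‖ :=
    hconn.forall_of_step τ₀ rfl (hbar τ₀) fun τ₁ τ₂ h₁₂ h₁ => by
      rw [← h₁, ← hlocal τ₁ h₁ τ₂ h₁₂, norm_mul, Y.norm_eta h₁₂, one_mul]
  exact fun τ₁ τ₂ => hlocal τ₁ (hnorm τ₁) τ₂

theorem IsEtaInvariant.eq_or_eq_neg (hconn : Y.StronglyConnected) {g : O.K → ℂ}
    (hg : Y.IsEtaInvariant g) (hbar : ∀ τ, g (O.bar τ) = - g τ) (τ₀ τ : O.K) :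
    g τ = g τ₀ ∨ g τ = - g τ₀ := by
  refine hconn.forall_of_step (p := fun τ => g τ = g τ₀ ∨ g τ = - g τ₀) τ₀ (Or.inl rfl)
    (Or.inr (hbar τ₀)) (fun τ₁ τ₂ h₁₂ h₁ => ?_) τ
  have h := hg τ₁ τ₂ h₁₂
  rcases Y.eta_vals τ₁ τ₂ with hη | hη | hη
  · exact absurd hη h₁₂
  · rw [hη, Complex.ofReal_one, one_mul] at h
    rwa [h]
  · rw [hη, Complex.ofReal_neg, Complex.ofReal_one, neg_one_mul, neg_eq_iff_eq_neg] at h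
    rcases h₁ with h₁ | h₁ <;> simp [h, h₁]

theorem IsEtaInvariant.exists_isBalancedOrientation (hconn : Y.StronglyConnected)
    {g : O.K → ℂ} (hg : Y.IsEtaInvariant g) (hbar : ∀ τ, g (O.bar τ) = - g τ) (hg0 : g ≠ 0) :
    ∃ A, Y.IsBalancedOrientation A := by
  obtain ⟨τ₀, hτ₀⟩ : ∃ τ₀, g τ₀ ≠ 0 := Function.ne_iff.1 hg0
  refine ⟨{τ | g τ = g τ₀}, fun τ => ?_, fun τ₁ h₁ τ₂ h₂ h₁₂ => ?_⟩
  · simp only [Set.mem_ofPred_eq, hbar, neg_eq_iff_eq_neg]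
    rcases hg.eq_or_eq_neg hconn hbar τ₀ τ with h | h <;>
      simp [h, self_ne_neg.2 hτ₀, neg_ne_self.2 hτ₀]
  · have h := hg τ₁ τ₂ h₁₂
    rw [h₁, h₂, mul_eq_right₀ hτ₀] at h
    exact_mod_cast h

theorem IsBalancedOrientation.isEtaInvariant {A : Set O.K} (hA : Y.IsBalancedOrientation A) :
    Y.IsEtaInvariant (orientationSign A) := by
  have hmem : ∀ τ₁ ∈ A, ∀ τ₂ ∈ A, Y.eta τ₁ τ₂ ≠ 0 →
      (Y.eta τ₁ τ₂ : ℂ) * orientationSign A τ₂ = orientationSign A τ₁ :=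
    fun τ₁ h₁ τ₂ h₂ h₁₂ => by simp [orientationSign, h₁, h₂, hA.2 τ₁ h₁ τ₂ h₂ h₁₂]
  intro τ₁ τ₂ h₁₂
  rcases hA.1.mem_or_bar_mem τ₁ with h₁ | h₁ <;> rcases hA.1.mem_or_bar_mem τ₂ with h₂ | h₂
  all_goals
    simpa only [eta_bar_left, eta_bar_right, hA.1.orientationSign_bar, Complex.ofReal_neg,
      neg_mul_neg, neg_neg, neg_mul, mul_neg, neg_inj] using
      hmem _ h₁ _ h₂ (by simpa [eta_bar_left, eta_bar_right] using h₁₂)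

theorem exists_isBalancedOrientation_of_disc_eq_self [Finite O.K] (hm : 0 < Y.mult)
    (hconn : Y.StronglyConnected) {f : O.K → ℂ} (hf0 : f ≠ 0) (hf : Y.disc f = f) :
    ∃ A, Y.IsBalancedOrientation A := by
  set g := fun τ => Y.c τ * f τ
  have hbar : ∀ τ, g (O.bar τ) = - g τ := by
    intro τ
    simp only [g, c_bar]
    rw [← congrFun hf (O.bar τ), disc_apply_bar, congrFun hf τ, mul_neg]
  have hg0 : g ≠ 0 := fun h => hf0 <| funext fun τ =>
    (mul_eq_zero.1 (congrFun h τ)).resolve_left (Y.c_ne_zero hm τ)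
  have hg := (isHarmonic_c_mul_of_disc_eq_self hm hf).isEtaInvariant hconn
    fun τ => (congrArg norm (hbar τ)).trans (norm_neg _)
  exact hg.exists_isBalancedOrientation hconn hbar hg0

theorem IsDownOf.totallyNonCoherentlyOrientable_iff {Odn : OrientedSet} {P : SgnPair Odn O}
    (hY : Y.IsDownOf P) :
    P.TotallyNonCoherentlyOrientable ↔ ∃ A, Y.IsBalancedOrientation A := by
  refine exists_congr fun A => and_congr_right fun _ =>
    ⟨fun h τ₁ h₁ τ₂ h₂ h₁₂ => ?_, fun h σ₁ h₁ σ₂ h₂ hne hnb μ hμ₁ hμ₂ => ?_⟩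
  · obtain ⟨hne, hnb, μ, hμ₁, hμ₂⟩ := (hY.1 τ₁ τ₂).1 h₁₂
    rw [hY.2 τ₁ τ₂ μ hne hnb hμ₁ hμ₂]
    exact h τ₁ h₁ τ₂ h₂ hne hnb μ hμ₁ hμ₂
  · rw [← hY.2 σ₁ σ₂ μ hne hnb hμ₁ hμ₂]
    exact h σ₁ h₁ σ₂ h₂ ((hY.1 σ₁ σ₂).2 ⟨hne, hnb, μ, hμ₁, hμ₂⟩)

end GroverStructure

theorem eigenvalue_one_iff_totally_non_coherently_orientable_general
    (Odn O : OrientedSet) [Finite O.K] (hne : Nonempty O.K)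
    (P : SgnPair Odn O)
    (Y : GroverStructure O) (hYm : Y.mult = 2) (hY : Y.IsDownOf P)
    (hconn : ∀ σ σ' : O.K, σ' ≠ σ → σ' ≠ O.bar σ →
      Relation.ReflTransGen (fun a b => Y.eta a b ≠ 0) σ σ') :
    (∃ g : O.K → ℂ, g ≠ 0 ∧ Y.disc g = g) ↔ P.TotallyNonCoherentlyOrientable := by
  have hm : 0 < Y.mult := hYm ▸ two_pos
  rw [hY.totallyNonCoherentlyOrientable_iff]
  constructor
  · rintro ⟨f, hf0, hf⟩
    exact GroverStructure.exists_isBalancedOrientation_of_disc_eq_self hm hconn hf0 hf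
  · rintro ⟨A, hA⟩
    refine ⟨_, fun h => ?_, GroverStructure.disc_eq_self_of_isEtaInvariant hm hA.isEtaInvariant⟩
    obtain ⟨τ⟩ := hne
    exact mul_ne_zero (inv_ne_zero (Y.c_ne_zero hm τ))
      (OrientedSet.orientationSign_ne_zero τ) (congrFun h τ)

/-- For a finite, pure, strongly connected `n`-dimensional complex,
`1` is an eigenvalue of the top down discriminant `D_n^down` if and only if `K` is
totally non-coherently orientable. -/
theorem eigenvalue_one_iff_totally_non_coherently_orientable
    (Odn O : OrientedSet) [Finite Odn.K] [Finite O.K] (hne : Nonempty O.K)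
    (P : SgnPair Odn O)
    (Y : GroverStructure O) (hYm : Y.mult = 2) (hY : Y.IsDownOf P)
    (hconn : ∀ σ σ' : O.K, σ' ≠ σ → σ' ≠ O.bar σ →
      Relation.ReflTransGen (fun a b => Y.eta a b ≠ 0) σ σ') :
    (∃ g : O.K → ℂ, g ≠ 0 ∧ Y.disc g = g) ↔ P.TotallyNonCoherentlyOrientable :=
  eigenvalue_one_iff_totally_non_coherently_orientable_general Odn O hne P Y hYm hY hconn
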